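/- Set λ := (1 − (n+1)L)^{-1}, so λ > 1. Then for every nonempty subset f ⊆ {0,…,n}: CR_f = Σ ∩ r_λ^{-1}(R_f). In particular r_λ(CR_f) ⊆ R_f ⊆ R_{≤f}. -/

import Mathlib

open Finset

noncomputable section

/-- The affine hyperplane `E = {t ∈ ℝ^{n+1} : ∑ tᵢ = 1}`. -/
def planeE (n : ℕ) : Set (Fin (n+1) → ℝ) := {t | ∑ i, t i = 1}

/-- The standard n-simplex `Σ = {t ∈ E : tᵢ ≥ 0 ∀ i}`. -/
def simplexS (n : ℕ) : Set (Fin (n+1) → ℝ) := {t | ∑ i, t i = 1 ∧ ∀ i, 0 ≤ t i}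

/-- `R_f = {t ∈ E : tᵢ ≥ 0 for i ∈ f, tᵢ ≤ 0 for i ∉ f}`. -/
def regionR (n : ℕ) (f : Finset (Fin (n+1))) : Set (Fin (n+1) → ℝ) :=
  {t | ∑ i, t i = 1 ∧ (∀ i ∈ f, 0 ≤ t i) ∧ ∀ i ∉ f, t i ≤ 0}

/-- `R_{≤f} = {t ∈ E : tᵢ ≤ 0 for i ∉ f}`. -/
def regionRle (n : ℕ) (f : Finset (Fin (n+1))) : Set (Fin (n+1) → ℝ) :=
  {t | ∑ i, t i = 1 ∧ ∀ i ∉ f, t i ≤ 0}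

/-- The face `|f| = {t ∈ Σ : tᵢ = 0 for i ∉ f}`. -/
def faceF (n : ℕ) (f : Finset (Fin (n+1))) : Set (Fin (n+1) → ℝ) :=
  {t | (∑ i, t i = 1 ∧ ∀ i, 0 ≤ t i) ∧ ∀ i ∉ f, t i = 0}

/-- `CR_f = {t ∈ Σ : tᵢ ≥ L for i ∈ f, tᵢ ≤ L for i ∉ f}`. -/
def regionCR (n : ℕ) (L : ℝ) (f : Finset (Fin (n+1))) : Set (Fin (n+1) → ℝ) :=
  {t | (∑ i, t i = 1 ∧ ∀ i, 0 ≤ t i) ∧ (∀ i ∈ f, L ≤ t i) ∧ ∀ i ∉ f, t i ≤ L}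

/-- The barycentre `ξ_f` of the face `|f|`. -/
def bary (n : ℕ) (f : Finset (Fin (n+1))) : Fin (n+1) → ℝ :=
  fun i => if i ∈ f then (f.card : ℝ)⁻¹ else 0

/-- The retraction `q : E → Σ`, `q(t) = [max(t₀,0),…,max(tₙ,0)]`. -/
def retr (n : ℕ) (t : Fin (n+1) → ℝ) : Fin (n+1) → ℝ :=
  fun i => (∑ j, max (t j) 0)⁻¹ * max (t i) 0

/-- The collapsing map `C_Σ : Σ → Σ`, `C_Σ(t) = [min(t₀,L),…,min(tₙ,L)]`. -/
def collapse (n : ℕ) (L : ℝ) (t : Fin (n+1) → ℝ) : Fin (n+1) → ℝ :=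
  fun i => (∑ j, min (t j) L)⁻¹ * min (t i) L

/-- The radial expansion `r_λ : E → E`. -/
def rexp (n : ℕ) (lam : ℝ) (t : Fin (n+1) → ℝ) : Fin (n+1) → ℝ :=
  fun i => lam * t i - (lam - 1) / ((n : ℝ) + 1)

theorem sum_rexp {n : ℕ} (lam : ℝ) {t : Fin (n+1) → ℝ} (ht : ∑ i, t i = 1) :
    ∑ i, rexp n lam t i = 1 := by
  simp only [rexp, sum_sub_distrib, ← mul_sum, ht, sum_const, card_univ, Fintype.card_fin,
    nsmul_eq_mul]
  push_cast
  field_simp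
  ring

/-- For this choice of `λ` the expansion `r_λ` is centred at the constant point `(L, …, L)`. -/
theorem rexp_apply_of_mul_eq_one {n : ℕ} {L lam : ℝ} (h : lam * (1 - ((n : ℝ) + 1) * L) = 1)
    (t : Fin (n+1) → ℝ) (i : Fin (n+1)) : rexp n lam t i = lam * (t i - L) := by
  have hsub : lam - 1 = lam * L * ((n : ℝ) + 1) := by linarith
  simp only [rexp, hsub]
  field_simp

theorem rexp_mem_regionR_iff {n : ℕ} {L lam : ℝ} (hlam : 0 < lam)
    (h : lam * (1 - ((n : ℝ) + 1) * L) = 1) (f : Finset (Fin (n+1))) {t : Fin (n+1) → ℝ}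
    (ht : ∑ i, t i = 1) :
    rexp n lam t ∈ regionR n f ↔ (∀ i ∈ f, L ≤ t i) ∧ ∀ i ∉ f, t i ≤ L := by
  have hnonneg (i : Fin (n+1)) : 0 ≤ rexp n lam t i ↔ L ≤ t i := by
    rw [rexp_apply_of_mul_eq_one h, mul_nonneg_iff_of_pos_left hlam, sub_nonneg]
  have hnonpos (i : Fin (n+1)) : rexp n lam t i ≤ 0 ↔ t i ≤ L := by
    rw [rexp_apply_of_mul_eq_one h, ← neg_nonneg, ← mul_neg, mul_nonneg_iff_of_pos_left hlam,
      neg_nonneg, sub_nonpos]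
  simp only [regionR, Set.mem_ofPred_eq, sum_rexp lam ht, true_and, hnonneg, hnonpos]

theorem regionCR_eq_simplexS_inter_preimage {n : ℕ} {L lam : ℝ} (hlam : 0 < lam)
    (h : lam * (1 - ((n : ℝ) + 1) * L) = 1) (f : Finset (Fin (n+1))) :
    regionCR n L f = simplexS n ∩ rexp n lam ⁻¹' regionR n f := by
  ext t
  by_cases ht : ∑ i, t i = 1
  · simp only [regionCR, simplexS, Set.mem_inter_iff, Set.mem_preimage,
      rexp_mem_regionR_iff hlam h f ht]
    rfl
  · simp [regionCR, simplexS, ht]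

theorem regionR_subset_regionRle (n : ℕ) (f : Finset (Fin (n+1))) :
    regionR n f ⊆ regionRle n f :=
  fun _ ⟨hsum, _, hle⟩ => ⟨hsum, hle⟩

/-- With λ = (1-(n+1)L)⁻¹ one has λ > 1 and CR_f = Σ ∩ r_λ⁻¹(R_f); in
particular r_λ(CR_f) ⊆ R_f ⊆ R_{≤f}. -/
theorem stmt13 (n : ℕ) (L lam : ℝ) (hL0 : 0 < L) (hL1 : L < 1 / ((n : ℝ) + 1))
    (hlam : lam = (1 - ((n : ℝ) + 1) * L)⁻¹) :
    1 < lam ∧ ∀ f : Finset (Fin (n+1)), f.Nonempty →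
      (regionCR n L f = simplexS n ∩ (rexp n lam) ⁻¹' (regionR n f) ∧
       (rexp n lam) '' (regionCR n L f) ⊆ regionR n f ∧
       regionR n f ⊆ regionRle n f) := by
  have hpos : 0 < 1 - ((n : ℝ) + 1) * L := by
    rw [lt_div_iff₀ (by positivity)] at hL1
    linarith
  have hmul : lam * (1 - ((n : ℝ) + 1) * L) = 1 := by
    rw [hlam, inv_mul_cancel₀ hpos.ne']
  have hlam1 : 1 < lam := by
    rw [hlam, one_lt_inv_iff₀]
    exact ⟨hpos, sub_lt_self 1 (by positivity)⟩
  have hCR := regionCR_eq_simplexS_inter_preimage (zero_lt_one.trans hlam1) hmul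
  refine ⟨hlam1, fun f _ => ⟨hCR f, ?_, regionR_subset_regionRle n f⟩⟩
  rw [hCR f, Set.image_subset_iff]
  exact Set.inter_subset_right
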